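/- The following 2×2 matrices over K satisfy the B₂ affine Hecke relations and give an irreducible representation (every invariant K-subspace of K² is 0 or K²): X₁ = diag(−p⁻¹, p⁻¹), X₂ = diag(p⁻¹, −p⁻¹), T₁ with rows [(q²−1)/(2q), (1+q²)²/(4q²)], [1, (q²−1)/(2q)], T₂ = diag(−p⁻¹, −p⁻¹). (This is the 2-dimensional calibrated composition factor U_c² of Ind_{Ĥ₂}^{Ĥ} ρ₂ᶜ.) -/
import Mathlib


set_option maxHeartbeats 2000000
set_option synthInstance.maxHeartbeats 400000
set_option synthInstance.maxHeartbeats 2000000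

noncomputable section

/-- `K = ℂ(p,q)`, the field of rational functions in two indeterminates over `ℂ`. -/
abbrev K : Type := FractionRing (MvPolynomial (Fin 2) ℂ)

/-- The indeterminate `p ∈ K`. -/
def pp : K := algebraMap (MvPolynomial (Fin 2) ℂ) K (MvPolynomial.X 0)

/-- The indeterminate `q ∈ K`. -/
def qq : K := algebraMap (MvPolynomial (Fin 2) ℂ) K (MvPolynomial.X 1)

/-- A quadruple of `n × n` matrices over `K` satisfies the `B₂` affine Hecke relations
(with parameters `p`, `q`). -/
def HeckeRel {n : ℕ} (p q : K) (T₁ T₂ X₁ X₂ : Matrix (Fin n) (Fin n) K) : Prop :=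
  IsUnit X₁ ∧ IsUnit X₂ ∧
  (T₁ - q • 1) * (T₁ + q⁻¹ • 1) = 0 ∧
  (T₂ - p • 1) * (T₂ + p⁻¹ • 1) = 0 ∧
  T₁ * T₂ * T₁ * T₂ = T₂ * T₁ * T₂ * T₁ ∧
  T₁ * X₂ * T₁ = X₁ ∧
  T₂ * X₂⁻¹ * T₂ = X₂ ∧
  T₂ * X₁ = X₁ * T₂ ∧
  X₁ * X₂ = X₂ * X₁

/-- Irreducibility: the only `K`-subspaces of `Kⁿ` invariant under all four matrices
are `0` and `Kⁿ`. -/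
def IsIrredRep {n : ℕ} (T₁ T₂ X₁ X₂ : Matrix (Fin n) (Fin n) K) : Prop :=
  ∀ U : Submodule K (Fin n → K),
    (∀ v ∈ U, T₁.mulVec v ∈ U) → (∀ v ∈ U, T₂.mulVec v ∈ U) →
    (∀ v ∈ U, X₁.mulVec v ∈ U) → (∀ v ∈ U, X₂.mulVec v ∈ U) →
    U = ⊥ ∨ U = ⊤

/-- `X₁` of `U_c²`. -/
def X1c : Matrix (Fin 2) (Fin 2) K := !![-pp⁻¹, 0; 0, pp⁻¹]

/-- `X₂` of `U_c²`. -/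
def X2c : Matrix (Fin 2) (Fin 2) K := !![pp⁻¹, 0; 0, -pp⁻¹]

/-- `T₁` of `U_c²`. -/
def T1c : Matrix (Fin 2) (Fin 2) K :=
  !![(qq ^ 2 - 1) / (2 * qq), (1 + qq ^ 2) ^ 2 / (4 * qq ^ 2); 1, (qq ^ 2 - 1) / (2 * qq)]

/-- `T₂` of `U_c²`. -/
def T2c : Matrix (Fin 2) (Fin 2) K := !![-pp⁻¹, 0; 0, -pp⁻¹]

section Generic

variable {F : Type*} [Field F]

/-- generic `T₁`. -/
def T1F (q : F) : Matrix (Fin 2) (Fin 2) F :=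
  !![(q ^ 2 - 1) / (2 * q), (1 + q ^ 2) ^ 2 / (4 * q ^ 2); 1, (q ^ 2 - 1) / (2 * q)]

/-- generic `T₂`. -/
def T2F (p : F) : Matrix (Fin 2) (Fin 2) F := !![-p⁻¹, 0; 0, -p⁻¹]

/-- generic `X₁`. -/
def X1F (p : F) : Matrix (Fin 2) (Fin 2) F := !![-p⁻¹, 0; 0, p⁻¹]

/-- generic `X₂`. -/
def X2F (p : F) : Matrix (Fin 2) (Fin 2) F := !![p⁻¹, 0; 0, -p⁻¹]

lemma mulVecF (a b c d x y : F) :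
    Matrix.mulVec !![a, b; c, d] ![x, y] = ![a * x + b * y, c * x + d * y] := by
  funext i
  fin_cases i <;> simp [Matrix.mulVec, dotProduct, Fin.sum_univ_two]

lemma four_ne (h2 : (2 : F) ≠ 0) : (4 : F) ≠ 0 := by
  rw [show (4 : F) = 2 * 2 by norm_num]
  exact mul_ne_zero h2 h2

lemma sixteen_ne (h2 : (2 : F) ≠ 0) : (16 : F) ≠ 0 := by
  rw [show (16 : F) = (2 * 2) * (2 * 2) by norm_num]
  exact mul_ne_zero (mul_ne_zero h2 h2) (mul_ne_zero h2 h2)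

variable (p q : F)

lemma genX1unit (hp : p ≠ 0) : IsUnit (X1F p) := by
  rw [Matrix.isUnit_iff_isUnit_det, X1F, Matrix.det_fin_two_of, isUnit_iff_ne_zero]
  simp [hp]

lemma genX2unit (hp : p ≠ 0) : IsUnit (X2F p) := by
  rw [Matrix.isUnit_iff_isUnit_det, X2F, Matrix.det_fin_two_of, isUnit_iff_ne_zero]
  simp [hp]

lemma genRel1 (hp : p ≠ 0) (hq : q ≠ 0) (h2 : (2 : F) ≠ 0) :
    (T1F q - q • 1) * (T1F q + q⁻¹ • 1) = 0 := by
  have h4 := four_ne h2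
  have h16 := sixteen_ne h2
  ext i j
  fin_cases i <;> fin_cases j <;>
    simp [T1F, Matrix.mul_apply, Fin.sum_univ_two, Matrix.one_apply] <;>
    field_simp [hp, hq, h2, h4, h16] <;> ring

lemma genRel2 (hp : p ≠ 0) (hq : q ≠ 0) (h2 : (2 : F) ≠ 0) :
    (T2F p - p • 1) * (T2F p + p⁻¹ • 1) = 0 := by
  have h4 := four_ne h2
  have h16 := sixteen_ne h2
  ext i j
  fin_cases i <;> fin_cases j <;>
    simp [T2F, Matrix.mul_apply, Fin.sum_univ_two, Matrix.one_apply] <;>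
    field_simp [hp, hq, h2, h4, h16] <;> ring

lemma genBraid : T1F q * T2F p * T1F q * T2F p = T2F p * T1F q * T2F p * T1F q := by
  ext i j
  fin_cases i <;> fin_cases j <;>
    simp [T1F, T2F, Matrix.mul_apply, Fin.sum_univ_two] <;> ring

lemma genRel6 (hp : p ≠ 0) (hq : q ≠ 0) (h2 : (2 : F) ≠ 0) :
    T1F q * X2F p * T1F q = X1F (p : F) := by
  have h4 := four_ne h2
  have h16 := sixteen_ne h2
  ext i j
  fin_cases i <;> fin_cases j <;>
    simp [T1F, X2F, X1F, Matrix.mul_apply, Fin.sum_univ_two] <;>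
    field_simp [hp, hq, h2, h4, h16] <;> ring_nf <;>
    field_simp [hp, hq, h2, h4, h16] <;> ring_nf

lemma genX2inv (hp : p ≠ 0) : (X2F p)⁻¹ = !![(p : F), 0; 0, -p] := by
  apply Matrix.inv_eq_right_inv
  ext i j
  fin_cases i <;> fin_cases j <;>
    simp [X2F, Matrix.mul_apply, Fin.sum_univ_two] <;> field_simp [hp]

lemma genRel7 (hp : p ≠ 0) : T2F p * (X2F p)⁻¹ * T2F p = X2F p := by
  rw [genX2inv p hp]
  ext i j
  fin_cases i <;> fin_cases j <;>
    simp [T2F, X2F, Matrix.mul_apply, Fin.sum_univ_two] <;> field_simp [hp]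

lemma genRel8 : T2F p * X1F p = X1F p * T2F (p : F) := by
  ext i j
  fin_cases i <;> fin_cases j <;>
    simp [T2F, X1F, Matrix.mul_apply, Fin.sum_univ_two] <;> ring

lemma genRel9 : X1F p * X2F p = X2F p * X1F (p : F) := by
  ext i j
  fin_cases i <;> fin_cases j <;>
    simp [X1F, X2F, Matrix.mul_apply, Fin.sum_univ_two] <;> ring

lemma genIrred (hp : p ≠ 0) (hq : q ≠ 0) (h2 : (2 : F) ≠ 0)
    (h1q : (1 : F) + q ^ 2 ≠ 0) :
    ∀ U : Submodule F (Fin 2 → F),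
      (∀ v ∈ U, (T1F q).mulVec v ∈ U) → (∀ v ∈ U, (X1F p).mulVec v ∈ U) →
      U = ⊥ ∨ U = ⊤ := by
  have h4 := four_ne h2
  have h16 := sixteen_ne h2
  intro U hT1 hX1
  by_cases hU : U = ⊥
  · exact Or.inl hU
  right
  obtain ⟨v, hvU, hv0⟩ := Submodule.exists_mem_ne_zero_of_ne_bot hU
  have hveq : v = ![v 0, v 1] := by
    funext i; fin_cases i <;> rfl
  have hx1v : (X1F p).mulVec v ∈ U := hX1 v hvU
  have hx1v' : (![-p⁻¹ * v 0 + 0 * v 1, 0 * v 0 + p⁻¹ * v 1] : Fin 2 → F) ∈ U := by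
    rw [← mulVecF, ← hveq]; exact hx1v
  have he0 : v 0 ≠ 0 ∨ v 1 ≠ 0 := by
    by_contra h
    push_neg at h
    apply hv0
    rw [hveq, h.1, h.2]
    funext i; fin_cases i <;> rfl
  have hsub : (![2 * v 0, 0] : Fin 2 → F) ∈ U := by
    have h := U.sub_mem hvU (U.smul_mem p hx1v')
    have e : v - p • ![-p⁻¹ * v 0 + 0 * v 1, 0 * v 0 + p⁻¹ * v 1]
        = (![2 * v 0, 0] : Fin 2 → F) := by
      rw [hveq]
      funext i
      fin_cases i <;> simp <;> field_simp [hp] <;> ring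
    rwa [e] at h
  have hadd : (![0, 2 * v 1] : Fin 2 → F) ∈ U := by
    have h := U.add_mem hvU (U.smul_mem p hx1v')
    have e : v + p • ![-p⁻¹ * v 0 + 0 * v 1, 0 * v 0 + p⁻¹ * v 1]
        = (![0, 2 * v 1] : Fin 2 → F) := by
      rw [hveq]
      funext i
      fin_cases i <;> simp <;> field_simp [hp] <;> ring
    rwa [e] at h
  have step1 : ∀ c : F, c ≠ 0 → (![c, 0] : Fin 2 → F) ∈ U →
      ((![(1:F), 0] : Fin 2 → F) ∈ U ∧ (![(0:F), 1] : Fin 2 → F) ∈ U) := by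
    intro c hc hcU
    have he1 : (![(1:F), 0] : Fin 2 → F) ∈ U := by
      have h := U.smul_mem c⁻¹ hcU
      have e : c⁻¹ • (![c, 0] : Fin 2 → F) = ![(1:F), 0] := by
        funext i; fin_cases i <;> simp <;> field_simp [hc]
      rwa [e] at h
    refine ⟨he1, ?_⟩
    have hT : (T1F q).mulVec ![(1:F), 0] ∈ U := hT1 _ he1
    have hT' : (![(q ^ 2 - 1) / (2 * q) * 1 + (1 + q ^ 2) ^ 2 / (4 * q ^ 2) * 0,
        1 * 1 + (q ^ 2 - 1) / (2 * q) * 0] : Fin 2 → F) ∈ U := by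
      rw [← mulVecF]; exact hT
    have h := U.sub_mem hT' (U.smul_mem ((q ^ 2 - 1) / (2 * q)) he1)
    have e : (![(q ^ 2 - 1) / (2 * q) * 1 + (1 + q ^ 2) ^ 2 / (4 * q ^ 2) * 0,
        1 * 1 + (q ^ 2 - 1) / (2 * q) * 0] : Fin 2 → F)
        - ((q ^ 2 - 1) / (2 * q)) • ![(1:F), 0] = ![(0:F), 1] := by
      funext i; fin_cases i <;> simp
    rwa [e] at h
  have step2 : ∀ c : F, c ≠ 0 → (![(0:F), c] : Fin 2 → F) ∈ U →
      ((![(1:F), 0] : Fin 2 → F) ∈ U ∧ (![(0:F), 1] : Fin 2 → F) ∈ U) := by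
    intro c hc hcU
    have he2 : (![(0:F), 1] : Fin 2 → F) ∈ U := by
      have h := U.smul_mem c⁻¹ hcU
      have e : c⁻¹ • (![(0:F), c] : Fin 2 → F) = ![(0:F), 1] := by
        funext i; fin_cases i <;> simp <;> field_simp [hc]
      rwa [e] at h
    have hT : (T1F q).mulVec ![(0:F), 1] ∈ U := hT1 _ he2
    have hT' : (![(q ^ 2 - 1) / (2 * q) * 0 + (1 + q ^ 2) ^ 2 / (4 * q ^ 2) * 1,
        1 * 0 + (q ^ 2 - 1) / (2 * q) * 1] : Fin 2 → F) ∈ U := by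
      rw [← mulVecF]; exact hT
    have hb : (![(1 + q ^ 2) ^ 2 / (4 * q ^ 2), 0] : Fin 2 → F) ∈ U := by
      have h := U.sub_mem hT' (U.smul_mem ((q ^ 2 - 1) / (2 * q)) he2)
      have e : (![(q ^ 2 - 1) / (2 * q) * 0 + (1 + q ^ 2) ^ 2 / (4 * q ^ 2) * 1,
          1 * 0 + (q ^ 2 - 1) / (2 * q) * 1] : Fin 2 → F)
          - ((q ^ 2 - 1) / (2 * q)) • ![(0:F), 1]
          = ![(1 + q ^ 2) ^ 2 / (4 * q ^ 2), 0] := by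
        funext i; fin_cases i <;> simp
      rwa [e] at h
    have hbne : (1 + q ^ 2) ^ 2 / (4 * q ^ 2) ≠ 0 :=
      div_ne_zero (pow_ne_zero _ h1q) (mul_ne_zero h4 (pow_ne_zero _ hq))
    exact ⟨(step1 _ hbne hb).1, he2⟩
  have key : (![(1:F), 0] : Fin 2 → F) ∈ U ∧ (![(0:F), 1] : Fin 2 → F) ∈ U := by
    rcases he0 with h | h
    · exact step1 (2 * v 0) (mul_ne_zero h2 h) hsub
    · exact step2 (2 * v 1) (mul_ne_zero h2 h) hadd
  rw [Submodule.eq_top_iff']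
  intro w
  have hw : w = w 0 • ![(1:F), 0] + w 1 • ![(0:F), 1] := by
    funext i; fin_cases i <;> simp
  rw [hw]
  exact U.add_mem (U.smul_mem _ key.1) (U.smul_mem _ key.2)

end Generic

lemma hp_ne : pp ≠ 0 := by
  simp only [pp, ne_eq, IsFractionRing.to_map_eq_zero_iff]
  exact MvPolynomial.X_ne_zero 0

lemma hq_ne : qq ≠ 0 := by
  simp only [qq, ne_eq, IsFractionRing.to_map_eq_zero_iff]
  exact MvPolynomial.X_ne_zero 1

lemma hK_charZero : CharZero K :=
  charZero_of_injective_algebraMap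
    (IsFractionRing.injective (MvPolynomial (Fin 2) ℂ) K)

lemma h2_ne : (2 : K) ≠ 0 := by
  have := hK_charZero
  exact two_ne_zero

lemma h1q_ne : 1 + qq ^ 2 ≠ 0 := by
  have h : (1 : K) + qq ^ 2
      = algebraMap (MvPolynomial (Fin 2) ℂ) K (1 + MvPolynomial.X 1 ^ 2) := by
    simp [qq]
  rw [h, ne_eq, IsFractionRing.to_map_eq_zero_iff]
  intro h'
  have := congrArg (MvPolynomial.eval (fun _ => (0:ℂ))) h'
  simp at this

/-- `U_c²` satisfies the `B₂` affine Hecke relations and is irreducible. -/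
theorem Uc2_relations_and_irreducible :
    HeckeRel pp qq T1c T2c X1c X2c ∧ IsIrredRep T1c T2c X1c X2c := by
  have hp := hp_ne
  have hq := hq_ne
  have h2 := h2_ne
  have h1q := h1q_ne
  constructor
  · exact ⟨genX1unit pp hp, genX2unit pp hp, genRel1 pp qq hp hq h2, genRel2 pp qq hp hq h2,
      genBraid pp qq, genRel6 pp qq hp hq h2, genRel7 pp hp, genRel8 pp, genRel9 pp⟩
  · intro U hT1 _ hX1 _
    exact genIrred pp qq hp hq h2 h1q U hT1 hX1
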